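/- arXiv:2004.10528 — 2 statements merged into one kernel-verified Lean document; each statement's English description precedes it below -/
import Mathlib

section
/- (Lemma 2.1) Let p < q be consecutive odd primes and let m = (p+q)/2. Let c be the number of odd multiples of p lying in the interval (p·q, m²], i.e. the nonnegative integer with p(q+2c) the largest odd multiple of p not exceeding m², and let d be the number of odd multiples of q lying in (p·q, m²], i.e. the nonnegative integer with q(p+2d) the largest odd multiple of q not exceeding m². Then d ≤ c. -/
/-- (Lemma 2.1) Let `p < q` be consecutive odd primes, `m = (p+q)/2`. If `c` is the
nonnegative integer with `p*(q+2c)` the largest odd multiple of `p` not exceeding `m^2`,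
and `d` the nonnegative integer with `q*(p+2d)` the largest odd multiple of `q` not
exceeding `m^2`, then `d ≤ c`. -/
theorem stmt_2 (p q m c d : ℕ) (hp : p.Prime) (hq : q.Prime)
    (hop : Odd p) (hoq : Odd q) (hlt : p < q)
    (hcons : ∀ r, p < r → r < q → ¬ r.Prime)
    (hm : m = (p + q) / 2)
    (hc : IsGreatest {n : ℕ | (∃ k : ℕ, n = (2 * k + 1) * p) ∧ n ≤ m ^ 2} (p * (q + 2 * c)))
    (hd : IsGreatest {n : ℕ | (∃ k : ℕ, n = (2 * k + 1) * q) ∧ n ≤ m ^ 2} (q * (p + 2 * d))) :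
    d ≤ c := by
  by_contra h
  push_neg at h
  obtain ⟨j, hj⟩ := hoq
  have hp0 : 0 < p := hp.pos
  have hgt : m ^ 2 < p * (q + 2 * (c + 1)) := by
    by_contra hle
    push_neg at hle
    have hmem : p * (q + 2 * (c + 1)) ∈
        {n : ℕ | (∃ k : ℕ, n = (2 * k + 1) * p) ∧ n ≤ m ^ 2} := by
      refine ⟨⟨j + c + 1, ?_⟩, hle⟩
      subst hj; ring
    have := hc.2 hmem
    nlinarith
  have hd1 : q * (p + 2 * d) ≤ m ^ 2 := hd.1.2
  nlinarith
end

section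
/- Suppose that for every pair of consecutive primes p < q one has (q − p)³ < 16·p². Then for every integer N > 16, if p is the largest prime less than N³ and q is the next prime after p, then N³ < q < (N+1)³ − 1. -/
/-- Suppose for every pair of consecutive primes `p < q` one has `(q-p)^3 < 16*p^2`.
Then for every integer `N > 16`, if `p` is the largest prime less than `N^3` and `q`
is the next prime after `p`, then `N^3 < q < (N+1)^3 - 1`. -/
theorem stmt_12
    (H : ∀ p q : ℕ, p.Prime → q.Prime → p < q →
      (∀ r, p < r → r < q → ¬ r.Prime) → (q - p) ^ 3 < 16 * p ^ 2) :
    ∀ N : ℕ, 16 < N → ∀ p q : ℕ, p.Prime → p < N ^ 3 →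
      (∀ r, r.Prime → r < N ^ 3 → r ≤ p) →
      q.Prime → p < q → (∀ r, p < r → r < q → ¬ r.Prime) →
      N ^ 3 < q ∧ q < (N + 1) ^ 3 - 1 := by
  intro N hN p q hp hpN hmax hq hpq hgap
  have hbound := H p q hp hq hpq hgap
  -- q ≥ N^3
  have hqge : N ^ 3 ≤ q := by
    by_contra h
    push_neg at h
    exact absurd (hmax q hq h) (by omega)
  -- N^3 is not prime
  have hne : q ≠ N ^ 3 := by
    intro h
    rcases hq.eq_one_or_self_of_dvd N (by rw [h]; exact ⟨N ^ 2, by ring⟩) with h1 | h2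
    · omega
    · rw [h] at h2
      have h3 : N * 1 * 1 < N * N * N :=
        Nat.mul_lt_mul_of_lt_of_le (Nat.mul_lt_mul_of_le_of_lt (le_refl N) (by omega) (by omega)) (by omega) (by omega)
      have : N < N ^ 3 := by ring_nf; ring_nf at h3; omega
      omega
  have hlow : N ^ 3 < q := lt_of_le_of_ne hqge (Ne.symm hne)
  constructor
  · exact hlow
  · set g := q - p with hg
    have hq2 : q = p + g := by omega
    have hgub : g < 3 * N ^ 2 := by
      by_contra h
      push_neg at h
      have hA : (3 * N ^ 2) ^ 3 ≤ g ^ 3 := Nat.pow_le_pow_left h 3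
      have hB : p ^ 2 < (N ^ 3) ^ 2 := Nat.pow_lt_pow_left hpN (by norm_num)
      have hN6 : 0 < N ^ 6 := by positivity
      have hA' : 27 * N ^ 6 ≤ g ^ 3 := by calc 27 * N ^ 6 = (3 * N ^ 2) ^ 3 := by ring
                                              _ ≤ g ^ 3 := hA
      have hB' : 16 * p ^ 2 < 16 * N ^ 6 := by
        have : (N ^ 3) ^ 2 = N ^ 6 := by ring
        omega
      omega
    have : q < N ^ 3 + 3 * N ^ 2 := by omega
    have hexp : (N + 1) ^ 3 = N ^ 3 + 3 * N ^ 2 + 3 * N + 1 := by ring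
    omega
end
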